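/- arXiv:2104.10821 — 3 statements merged into one kernel-verified Lean document; each statement's English description precedes it below -/
import Mathlib

section
/- For a_* ∈ 𝔖_r^M with maximal entry a_M and any t ≥ a_M, the complement a_*^{!t} again has the property that no value occurs more than twice, and applying complementation twice recovers a_*: (a_*^{!t})^{!t} = a_*. -/
/-- 𝔗_r^m : strictly increasing length-m sequences of naturals summing to r + m(m-1)/2. -/
def TT (r m : ℕ) : Set (List ℕ) :=
  {l | l.length = m ∧ l.Pairwise (· < ·) ∧ l.sum = r + m * (m - 1) / 2}

/-- Complement of `l` in `{0,1,...,t}`: remove `t - a` for each entry `a` of `l`. -/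
def complA (t : ℕ) (l : List ℕ) : List ℕ :=
  (List.range (t + 1)).filter (fun x => decide ((t - x) ∉ l))

/-- 𝔖_r^M (for given ε): weakly increasing length-M sequences, each value occurring
at most twice, with sum r + (M² - 2M + ε)/4. -/
def SS (r M ε : ℕ) : Set (List ℕ) :=
  {l | l.length = M ∧ l.Pairwise (· ≤ ·) ∧ (∀ x, l.count x ≤ 2) ∧
    l.sum = r + (M ^ 2 - 2 * M + ε) / 4}

/-- Complement of `l` in the multiset `{0,0,1,1,...,t,t}`, as a sorted list. -/
def complB (t : ℕ) (l : List ℕ) : List ℕ :=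
  (List.range (t + 1)).flatMap (fun x => List.replicate (2 - l.count (t - x)) x)

/-- Subtract 1 from each of the last `k` entries. -/
def decLast (k : ℕ) (l : List ℕ) : List ℕ :=
  l.take (l.length - k) ++ (l.drop (l.length - k)).map (fun x => x - 1)

def InducedT (r : ℕ) (l l' : List ℕ) : Prop :=
  ∃ k₀, 1 ≤ k₀ ∧ k₀ ≤ r ∧ decLast k₀ l ∈ TT (r - k₀) l.length ∧
    decLast k₀ l' ∈ TT (r - k₀) l'.length

def InducedS (r ε : ℕ) (l l' : List ℕ) : Prop :=
  ∃ k₀, 1 ≤ k₀ ∧ k₀ ≤ r ∧ decLast k₀ l ∈ SS (r - k₀) l.length ε ∧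
    decLast k₀ l' ∈ SS (r - k₀) l'.length ε

def shA (l : List ℕ) : List ℕ := 0 :: l.map (· + 1)
def shS (l : List ℕ) : List ℕ := 0 :: 0 :: l.map (· + 1)

def EquivA (l l' : List ℕ) : Prop := ∃ i j, shA^[i] l = shA^[j] l'
def EquivS (l l' : List ℕ) : Prop := ∃ i j, shS^[i] l = shS^[j] l'

def PairEquivA (p q : List ℕ × List ℕ) : Prop :=
  ∃ i j, shA^[i] p.1 = shA^[j] q.1 ∧ shA^[i] p.2 = shA^[j] q.2
def PairEquivS (p q : List ℕ × List ℕ) : Prop :=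
  ∃ i j, shS^[i] p.1 = shS^[j] q.1 ∧ shS^[i] p.2 = shS^[j] q.2

/-- The pattern: entries (a, a+p) in `l` and (a+1, a+p-1) in `l'` at the same
consecutive positions, all other entries equal. -/
def PairP (p : ℕ) (l l' : List ℕ) : Prop :=
  ∃ a u v, l = u ++ [a, a + p] ++ v ∧ l' = u ++ [a + 1, a + p - 1] ++ v

/-- (b, b+2, b+3, ..., b+p-2, b+p) -/
def listA (p b : ℕ) : List ℕ :=
  (b :: (List.range (p - 3)).map (fun i => b + 2 + i)) ++ [b + p]
/-- (b+1, b+2, ..., b+p-1) -/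
def listA' (p b : ℕ) : List ℕ :=
  (List.range (p - 1)).map (fun i => b + 1 + i)

/-- (b, b+1, b+2, b+2, ..., b+p-2, b+p-2, b+p-1, b+p) -/
def listB (p b : ℕ) : List ℕ :=
  b :: (b + 1) :: ((List.range (p - 3)).flatMap fun i => [b + 2 + i, b + 2 + i]) ++
    [b + p - 1, b + p]
/-- (b+1, b+1, b+2, b+2, ..., b+p-1, b+p-1) -/
def listB' (p b : ℕ) : List ℕ :=
  (List.range (p - 1)).flatMap fun i => [b + 1 + i, b + 1 + i]

/-- The multiset of parts (a_i - i), zero parts removed. -/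
def partsOf (l : List ℕ) : Multiset ℕ :=
  ↑((l.zipIdx.map fun p => p.1 - p.2).filter fun x => decide (x ≠ 0))

/-- Conjugate (transpose) of a multiset of parts. -/
def conjParts (s : Multiset ℕ) : Multiset ℕ :=
  Multiset.filter (fun x => x ≠ 0)
    ↑((List.range s.sum).map fun j => Multiset.card (Multiset.filter (fun x => j + 1 ≤ x) s))


/-!
`complB t l` contains each `x ≤ t` exactly `2 - count (t - x) l` times.
Since `x ↦ t - x` is an involution of `{0, …, t}` and every count of `l` is at most `2`,
the double complement has the same counts as `l`; both lists are sorted, hence equal.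
-/

namespace List

lemma count_flatMap_range_replicate (g : ℕ → ℕ) (n y : ℕ) :
    ((range n).flatMap fun x => replicate (g x) x).count y = if y < n then g y else 0 := by
  induction n with
  | zero => simp
  | succ n ih =>
    rw [range_succ, flatMap_append, count_append, ih]
    simp only [flatMap_singleton, count_replicate]
    rcases lt_trichotomy y n with h | rfl | h
    · simp [h, h.trans (Nat.lt_succ_self n), h.ne']
    · simp
    · simp [not_lt.mpr h.le, not_le.mpr h, h.ne]

lemma pairwise_le_flatMap_range_replicate (g : ℕ → ℕ) (n : ℕ) :
    ((range n).flatMap fun x => replicate (g x) x).Pairwise (· ≤ ·) := by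
  induction n with
  | zero => simp
  | succ n ih =>
    rw [range_succ, flatMap_append, flatMap_singleton]
    refine pairwise_append.mpr ⟨ih, pairwise_replicate.mpr (by simp), ?_⟩
    intro a ha b hb
    obtain ⟨x, hx, hax⟩ := mem_flatMap.mp ha
    rw [eq_of_mem_replicate hax, eq_of_mem_replicate hb]
    exact (mem_range.mp hx).le

lemma flatMap_range_replicate_count {l : List ℕ} {n : ℕ} (hs : l.Pairwise (· ≤ ·))
    (hn : ∀ x ∈ l, x < n) :
    ((range n).flatMap fun x => replicate (l.count x) x) = l := by
  refine (perm_iff_count.mpr fun y => ?_).eq_of_pairwise'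
    (pairwise_le_flatMap_range_replicate _ _) hs
  rw [count_flatMap_range_replicate]
  split_ifs with hy
  · rfl
  · exact (count_eq_zero.mpr fun hyl => hy (hn y hyl)).symm

end List

open List

lemma count_complB (t : ℕ) (l : List ℕ) (y : ℕ) :
    (complB t l).count y = if y ≤ t then 2 - l.count (t - y) else 0 := by
  simp only [complB, count_flatMap_range_replicate, Nat.lt_succ_iff]

lemma count_complB_le_two (t : ℕ) (l : List ℕ) (y : ℕ) : (complB t l).count y ≤ 2 := by
  rw [count_complB]
  split_ifs <;> omega

lemma complB_complB {t : ℕ} {l : List ℕ} (hs : l.Pairwise (· ≤ ·))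
    (hcount : ∀ x, l.count x ≤ 2) (ht : ∀ x ∈ l, x ≤ t) :
    complB t (complB t l) = l := by
  refine Eq.trans (flatMap_congr fun x hx => ?_)
    (flatMap_range_replicate_count hs fun x hx => Nat.lt_succ_of_le (ht x hx))
  have hxt : x ≤ t := Nat.lt_succ_iff.mp (mem_range.mp hx)
  rw [count_complB, if_pos (Nat.sub_le t x), Nat.sub_sub_self hxt]
  have := hcount x
  congr 1
  omega

theorem stmt4_general (r M t ε : ℕ)
    (l : List ℕ) (hl : l ∈ SS r M ε) (ht : ∀ x ∈ l, x ≤ t) :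
    (∀ x, (complB t l).count x ≤ 2) ∧ complB t (complB t l) = l := by
  obtain ⟨-, hsort, hcount, -⟩ := hl
  exact ⟨count_complB_le_two t l, complB_complB hsort hcount ht⟩

theorem stmt4 (r M t ε : ℕ) (hε : ε ≤ 1) (hr : 1 ≤ r) (hM : ∃ n, M = ε + 2 * n)
    (l : List ℕ) (hl : l ∈ SS r M ε) (ht : ∀ x ∈ l, x ≤ t) :
    (∀ x, (complB t l).count x ≤ 2) ∧ complB t (complB t l) = l :=
  stmt4_general r M t ε l hl ht
end

section
/- Suppose (a_*, a'_*) ∈ 𝔗_r^m × 𝔗_r^m with (a_k, a_{k+1}) = (a, a+3), (a'_k, a'_{k+1}) = (a+1, a+2), and a_s = a'_s for s ≠ k, k+1 (the case p = 3). Then for t ≥ max(a_m, a'_m), the pair (a'_*^{!t}, a_*^{!t}) is again of the same form: there exist an index k' and a value b with the entries of a'_*^{!t} at positions k', k'+1 equal to (b, b+3), the entries of a_*^{!t} at those positions equal to (b+1, b+2), and all other entries agreeing. -/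
/-! The reflection `x ↦ t - x` sends the window `a, …, a + 3` to `b, …, b + 3` with
`b = t - a - 3`, and `complA t` acts on each side of the window separately, since sortedness keeps
the rest of `l` outside it. On the window, `l` holds the two ends and `l'` the two middle entries;
complementing swaps these roles, which is the pattern again with `b` in place of `a`. -/

theorem List.range_add_add (b n c : ℕ) :
    List.range (b + n + c) = List.range b ++ List.range' b n ++ List.range' (b + n) c := by
  rw [List.range_eq_range', List.range_eq_range', ← List.range'_append_1,
    ← List.range'_append_1, Nat.zero_add, Nat.zero_add]

theorem List.Pairwise.bounds_of_append_pair {R : ℕ → ℕ → Prop} {u v : List ℕ} {a c : ℕ}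
    (h : (u ++ [a, c] ++ v).Pairwise R) : (∀ x ∈ u, R x a) ∧ ∀ x ∈ v, R c x := by
  simp only [List.pairwise_append, List.pairwise_cons] at h
  grind

theorem complA_append_of_bounds {t a b n : ℕ} {u w v : List ℕ} (hab : b + n + a = t + 1)
    (hu : ∀ x ∈ u, x < a) (hw : ∀ x ∈ w, a ≤ x ∧ x < a + n) (hv : ∀ x ∈ v, a + n ≤ x) :
    complA t (u ++ w ++ v) =
      (List.range b).filter (fun x => t - x ∉ v) ++
      (List.range' b n).filter (fun x => t - x ∉ w) ++
      (List.range' (b + n) a).filter (fun x => t - x ∉ u) := by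
  rw [complA, ← hab, List.range_add_add, List.filter_append, List.filter_append]
  refine congrArg₂ _ (congrArg₂ _ ?_ ?_) ?_ <;> refine List.filter_congr fun x hx => ?_ <;>
    simp only [List.mem_range, List.mem_range'_1] at hx <;>
    simp only [List.mem_append, decide_eq_decide] <;> grind

theorem stmt6_general (r m t : ℕ) (l l' : List ℕ)
    (hl : l ∈ TT r m) (hP : PairP 3 l l')
    (ht : ∀ x ∈ l, x ≤ t) :
    PairP 3 (complA t l') (complA t l) := by
  obtain ⟨a, u, v, rfl, rfl⟩ := hP
  obtain ⟨hu, hv⟩ := hl.2.1.bounds_of_append_pair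
  have hat : a + 3 ≤ t := ht (a + 3) (by simp)
  obtain ⟨b, hb⟩ : ∃ b, b + 4 + a = t + 1 := ⟨t - (a + 3), by omega⟩
  have hwindow : List.range' b 4 = [b, b + 1, b + 2, b + 3] := rfl
  have h0 : t - b = a + 3 := by omega
  have h1 : t - (b + 1) = a + 2 := by omega
  have h2 : t - (b + 2) = a + 1 := by omega
  have h3 : t - (b + 3) = a := by omega
  refine ⟨b, (List.range b).filter (fun x => t - x ∉ v),
    (List.range' (b + 4) a).filter (fun x => t - x ∉ u), ?_, ?_⟩ <;>
  rw [complA_append_of_bounds hb hu (by simp) hv] <;>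
  simp [hwindow, h0, h1, h2, h3]

theorem stmt6 (r m t : ℕ) (l l' : List ℕ)
    (hl : l ∈ TT r m) (hl' : l' ∈ TT r m) (hP : PairP 3 l l')
    (ht : ∀ x ∈ l, x ≤ t) (ht' : ∀ x ∈ l', x ≤ t) :
    PairP 3 (complA t l') (complA t l) :=
  stmt6_general r m t l l' hl hP ht
end

section
/- Let p ≥ 4 and suppose (a_*, a'_*) ∈ 𝔗_r^m × 𝔗_r^m satisfies (a_k, a_{k+1}) = (a, a+p), (a'_k, a'_{k+1}) = (a+1, a+p-1), a_s = a'_s for s ≠ k, k+1. Then (a_*, a'_*) is induced: there exists k₀ ∈ {1,...,r} such that decreasing the last k₀ entries of both sequences by 1 gives elements of 𝔗_{r-k₀}^m. -/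
/-!
Take `k₀` to be the number of entries from position `k + 1` on. Lowering them by one keeps both
sequences strictly increasing, because the gaps `(a, a + p)` and `(a + 1, a + p - 1)` at the cut
are at least `2` (this is where `p ≥ 4` enters). The lowered sequence is strictly increasing of
length `m`, so its sum `r - k₀ + m(m-1)/2` is at least `m(m-1)/2`, which forces `k₀ ≤ r`.
-/

theorem List.Pairwise.sum_range_add_le_sum {l : List ℕ} {c : ℕ} (hl : l.Pairwise (· < ·))
    (hc : ∀ x ∈ l, c ≤ x) : ∑ i ∈ Finset.range l.length, (c + i) ≤ l.sum := by
  induction l generalizing c with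
  | nil => simp
  | cons x t ih =>
    obtain ⟨hxt, ht⟩ := List.pairwise_cons.1 hl
    have hcx := hc x List.mem_cons_self
    have := ih (c := c + 1) ht fun y hy => hcx.trans_lt (hxt y hy)
    rw [List.length_cons, Finset.sum_range_succ', List.sum_cons]
    simp only [add_zero, add_assoc, add_comm 1] at this ⊢
    omega

theorem List.Pairwise.length_mul_pred_div_two_le_sum {l : List ℕ} (hl : l.Pairwise (· < ·)) :
    l.length * (l.length - 1) / 2 ≤ l.sum := by
  simpa [Finset.sum_range_id] using hl.sum_range_add_le_sum (c := 0) (by simp)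

theorem List.sum_map_sub_one_add_length {l : List ℕ} (hl : ∀ x ∈ l, 1 ≤ x) :
    (l.map (· - 1)).sum + l.length = l.sum := by
  induction l with
  | nil => rfl
  | cons x t ih =>
    have := hl x List.mem_cons_self
    have := ih fun y hy => hl y (List.mem_cons_of_mem x hy)
    simp only [List.map_cons, List.sum_cons, List.length_cons]
    omega

theorem decLast_length_append (x y : List ℕ) :
    decLast y.length (x ++ y) = x ++ y.map (· - 1) := by
  simp [decLast]

theorem List.Pairwise.append_map_sub_one_of_gap {s t : ℕ} {x y : List ℕ}
    (h : ((x ++ [s]) ++ t :: y).Pairwise (· < ·)) (hst : s + 1 < t) :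
    ((x ++ [s]) ++ (t :: y).map (· - 1)).Pairwise (· < ·) := by
  obtain ⟨hxs, hty, -⟩ := List.pairwise_append.1 h
  have hle_s : ∀ a ∈ x ++ [s], a ≤ s := by
    intro a ha
    rcases List.mem_append.1 ha with ha | ha
    · exact ((List.pairwise_append.1 hxs).2.2 a ha s List.mem_cons_self).le
    · simp_all
  have hge_t : ∀ b ∈ t :: y, t ≤ b := by
    intro b hb
    rcases List.mem_cons.1 hb with rfl | hb
    · rfl
    · exact ((List.pairwise_cons.1 hty).1 b hb).le
  refine List.pairwise_append.2 ⟨hxs, List.pairwise_map.2 ?_, ?_⟩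
  · exact hty.imp_of_mem fun ha _ hab => by have := hge_t _ ha; omega
  · rintro a ha _ hb'
    obtain ⟨b, hb, rfl⟩ := List.mem_map.1 hb'
    have := hle_s a ha
    have := hge_t b hb
    omega

theorem decLast_mem_TT_of_gap {r m s t : ℕ} {x y : List ℕ} (h : x ++ s :: t :: y ∈ TT r m)
    (hst : s + 1 < t) :
    y.length + 1 ≤ r ∧ decLast (y.length + 1) (x ++ s :: t :: y) ∈ TT (r - (y.length + 1)) m := by
  rw [show x ++ s :: t :: y = (x ++ [s]) ++ t :: y by simp] at h ⊢
  rw [← List.length_cons (a := t), decLast_length_append]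
  obtain ⟨hlen, hsorted, hsum⟩ := h
  have hsorted' := hsorted.append_map_sub_one_of_gap hst
  have hlen' : ((x ++ [s]) ++ (t :: y).map (· - 1)).length = m := by simpa using hlen
  have hmin := hsorted'.length_mul_pred_div_two_le_sum
  rw [hlen'] at hmin
  have hpos : ∀ b ∈ t :: y, 1 ≤ b := fun b hb =>
    Nat.one_le_of_lt ((List.pairwise_append.1 hsorted).2.2 s (by simp) b hb)
  have hsum' : ((x ++ [s]) ++ (t :: y).map (· - 1)).sum + (t :: y).length =
      r + m * (m - 1) / 2 := by
    rw [List.sum_append, add_assoc, List.sum_map_sub_one_add_length hpos, ← List.sum_append, hsum]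
  exact ⟨by omega, hlen', hsorted', by omega⟩

theorem stmt8 (r m p : ℕ) (hp : 4 ≤ p) (l l' : List ℕ)
    (hl : l ∈ TT r m) (hl' : l' ∈ TT r m) (hP : PairP p l l') :
    InducedT r l l' := by
  obtain ⟨a, u, v, rfl, rfl⟩ := hP
  simp only [List.append_assoc, List.cons_append, List.nil_append] at hl hl' ⊢
  obtain ⟨hr, hmem⟩ := decLast_mem_TT_of_gap hl (by omega)
  obtain ⟨-, hmem'⟩ := decLast_mem_TT_of_gap hl' (by omega)
  exact ⟨v.length + 1, by omega, hr, hl.1 ▸ hmem, hl'.1 ▸ hmem'⟩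
end
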